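/- Let G = (V,E) with n = |V|. The greedy smallest-last ordering produces an ordering whose value of ∑_{v∈V} ⃖d(v)² is at most 4·H_n times the minimum over all orderings, where H_n = ∑_{i=1}^n 1/i is the n-th harmonic number. -/

import Mathlib

open Finset

/-- A finite loop-free multigraph: edges indexed by `E`, each with two distinct endpoints. -/
structure Multigraph (V E : Type) where
  fst : E → V
  snd : E → V
  loopless : ∀ e, fst e ≠ snd e

namespace Multigraph

variable {V E : Type} [Fintype V] [DecidableEq V] [Fintype E] [DecidableEq E]

/-- Head of edge `e` under orientation `o`. -/
def head (G : Multigraph V E) (o : E → Bool) (e : E) : V :=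
  if o e then G.fst e else G.snd e

/-- Tail of edge `e` under orientation `o`. -/
def tail (G : Multigraph V E) (o : E → Bool) (e : E) : V :=
  if o e then G.snd e else G.fst e

/-- Indegree of `v` under orientation `o`. -/
def indeg (G : Multigraph V E) (o : E → Bool) (v : V) : ℕ :=
  (Finset.univ.filter (fun e => G.head o e = v)).card

/-- The orientation `o` contains a directed cycle (a closed directed trail). -/
def HasDicycle (G : Multigraph V E) (o : E → Bool) : Prop :=
  ∃ k : ℕ, ∃ hk : 0 < k, ∃ f : Fin k → E, Function.Injective f ∧
    ∀ i : Fin k, G.head o (f i) = G.tail o (f ⟨(i.val + 1) % k, Nat.mod_lt _ hk⟩)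

/-- The orientation `o` is acyclic. -/
def Acyclic (G : Multigraph V E) (o : E → Bool) : Prop := ¬ G.HasDicycle o

/-- Left-degree of `v` in the vertex ordering `σ`. -/
def leftDeg (G : Multigraph V E) (σ : V ≃ Fin (Fintype.card V)) (v : V) : ℕ :=
  (Finset.univ.filter (fun e =>
    (G.fst e = v ∧ σ (G.snd e) < σ v) ∨ (G.snd e = v ∧ σ (G.fst e) < σ v))).card

/-- Right-degree of `v` in the vertex ordering `σ`. -/
def rightDeg (G : Multigraph V E) (σ : V ≃ Fin (Fintype.card V)) (v : V) : ℕ :=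
  (Finset.univ.filter (fun e =>
    (G.fst e = v ∧ σ v < σ (G.snd e)) ∨ (G.snd e = v ∧ σ v < σ (G.fst e)))).card

/-- Degree of `v` in the subgraph induced by `S`. -/
def degIn (G : Multigraph V E) (S : Finset V) (v : V) : ℕ :=
  (Finset.univ.filter (fun e =>
    (G.fst e = v ∨ G.snd e = v) ∧ G.fst e ∈ S ∧ G.snd e ∈ S)).card

/-- Degree of `v` in `G`. -/
def deg (G : Multigraph V E) (v : V) : ℕ :=
  (Finset.univ.filter (fun e => G.fst e = v ∨ G.snd e = v)).card

/-- The set of vertices appearing at or before `v` in the ordering `σ`. -/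
def prefixSet (σ : V ≃ Fin (Fintype.card V)) (v : V) : Finset V :=
  Finset.univ.filter (fun u => σ u ≤ σ v)

end Multigraph

/-! If `v` is the `i`-th vertex of a smallest-last ordering, it has minimum degree in the
subgraph induced by the first `i` vertices, so by the handshake lemma `i · d(v) ≤ 2 mᵢ`, where `mᵢ`
is the number of edges of that subgraph. Any other ordering charges each of these `mᵢ` edges to its
later endpoint, so its left-degrees on these `i` vertices sum to at least `mᵢ`, and by
Cauchy–Schwarz its square-sum `A` is at least `mᵢ² / i`. Hence `d(v)² ≤ 4 mᵢ² / i² ≤ 4 A / i`, and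
summing over `i` gives `4 Hₙ A`. -/

namespace Multigraph

variable {V E : Type} {G : Multigraph V E}

section Order

variable [Fintype V] {σ : V ≃ Fin (Fintype.card V)}

lemma mem_prefixSet {v u : V} : u ∈ prefixSet σ v ↔ σ u ≤ σ v := by
  simp [prefixSet]

lemma card_prefixSet (v : V) : #(prefixSet σ v) = (σ v : ℕ) + 1 := by
  rw [← Fin.card_Iic (σ v), ← card_map σ.symm.toEmbedding]
  congr 1
  ext u
  simp [prefixSet]

variable (G σ) in
def laterEnd (e : E) : V :=
  if σ (G.fst e) < σ (G.snd e) then G.snd e else G.fst e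

lemma laterEnd_eq_iff_lt {e : E} {v : V} : G.laterEnd σ e = v ↔
    (G.fst e = v ∧ σ (G.snd e) < σ v) ∨ (G.snd e = v ∧ σ (G.fst e) < σ v) := by
  have hne : σ (G.fst e) ≠ σ (G.snd e) := σ.injective.ne (G.loopless e)
  unfold laterEnd
  split_ifs <;> grind

lemma laterEnd_eq_iff_le {e : E} {v : V} : G.laterEnd σ e = v ↔
    (G.fst e = v ∨ G.snd e = v) ∧ σ (G.fst e) ≤ σ v ∧ σ (G.snd e) ≤ σ v := by
  have hne : σ (G.fst e) ≠ σ (G.snd e) := σ.injective.ne (G.loopless e)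
  unfold laterEnd
  split_ifs <;> grind

end Order

variable [DecidableEq V] [Fintype E]

variable (G) in
def edgesIn (S : Finset V) : Finset E :=
  {e | G.fst e ∈ S ∧ G.snd e ∈ S}

lemma degIn_eq_card_fst_add_card_snd (S : Finset V) (u : V) :
    G.degIn S u = #{e ∈ G.edgesIn S | G.fst e = u} + #{e ∈ G.edgesIn S | G.snd e = u} := by
  classical
  rw [← card_union_of_disjoint, ← filter_or, edgesIn, filter_filter]
  · simp only [degIn, and_comm]
  · exact disjoint_filter.2 fun e _ h₁ h₂ => G.loopless e (h₁.trans h₂.symm)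

theorem sum_degIn_eq_two_mul_card_edgesIn (S : Finset V) :
    ∑ u ∈ S, G.degIn S u = 2 * #(G.edgesIn S) := by
  have hfst : Set.MapsTo G.fst (G.edgesIn S) S := fun e he => (mem_filter.1 he).2.1
  have hsnd : Set.MapsTo G.snd (G.edgesIn S) S := fun e he => (mem_filter.1 he).2.2
  simp only [degIn_eq_card_fst_add_card_snd, sum_add_distrib, ← card_eq_sum_card_fiberwise hfst,
    ← card_eq_sum_card_fiberwise hsnd, two_mul]

variable [Fintype V] {σ : V ≃ Fin (Fintype.card V)}

variable (G σ) in
def IsSmallestLast : Prop :=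
  ∀ v u : V, σ u ≤ σ v → G.degIn (prefixSet σ v) v ≤ G.degIn (prefixSet σ v) u

lemma leftDeg_eq_card_laterEnd (v : V) : G.leftDeg σ v = #{e | G.laterEnd σ e = v} := by
  simp only [leftDeg, laterEnd_eq_iff_lt]

lemma degIn_prefixSet_self (v : V) : G.degIn (prefixSet σ v) v = G.leftDeg σ v := by
  simp only [degIn, leftDeg_eq_card_laterEnd, laterEnd_eq_iff_le, mem_prefixSet]

theorem card_edgesIn_le_sum_leftDeg (S : Finset V) : #(G.edgesIn S) ≤ ∑ u ∈ S, G.leftDeg σ u := by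
  have hlater : Set.MapsTo (G.laterEnd σ) (G.edgesIn S) S := fun e he => by
    have := (mem_filter.1 he).2
    unfold laterEnd; split_ifs <;> tauto
  rw [card_eq_sum_card_fiberwise hlater]
  gcongr with u
  rw [leftDeg_eq_card_laterEnd]
  exact card_le_card (filter_subset_filter _ (subset_univ _))

theorem card_edgesIn_sq_le (S : Finset V) :
    (#(G.edgesIn S) : ℝ) ^ 2 ≤ #S * ∑ v, (G.leftDeg σ v : ℝ) ^ 2 :=
  calc (#(G.edgesIn S) : ℝ) ^ 2 ≤ (∑ u ∈ S, (G.leftDeg σ u : ℝ)) ^ 2 := by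
        gcongr; exact_mod_cast card_edgesIn_le_sum_leftDeg S
    _ ≤ #S * ∑ u ∈ S, (G.leftDeg σ u : ℝ) ^ 2 := sq_sum_le_card_mul_sum_sq
    _ ≤ #S * ∑ v, (G.leftDeg σ v : ℝ) ^ 2 := by
        gcongr; exact subset_univ S

namespace IsSmallestLast

theorem succ_mul_leftDeg_le (h : G.IsSmallestLast σ) (v : V) :
    ((σ v : ℕ) + 1) * G.leftDeg σ v ≤ 2 * #(G.edgesIn (prefixSet σ v)) := by
  rw [← card_prefixSet, ← sum_degIn_eq_two_mul_card_edgesIn, ← smul_eq_mul, ← sum_const,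
    ← degIn_prefixSet_self]
  exact sum_le_sum fun u hu => h v u (mem_prefixSet.1 hu)

theorem leftDeg_sq_le (h : G.IsSmallestLast σ) (σ' : V ≃ Fin (Fintype.card V)) (v : V) :
    (G.leftDeg σ v : ℝ) ^ 2 ≤ 4 / ((σ v : ℕ) + 1) * ∑ u, (G.leftDeg σ' u : ℝ) ^ 2 := by
  have hkd : ((σ v : ℕ) + 1 : ℝ) * G.leftDeg σ v ≤ 2 * #(G.edgesIn (prefixSet σ v)) := by
    exact_mod_cast h.succ_mul_leftDeg_le v
  have hm := card_edgesIn_sq_le (G := G) (σ := σ') (prefixSet σ v)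
  rw [card_prefixSet, Nat.cast_succ] at hm
  rw [div_mul_eq_mul_div, le_div_iff₀ (by positivity)]
  nlinarith [mul_self_le_mul_self (by positivity) hkd]

end IsSmallestLast

end Multigraph

open Multigraph

variable {V E : Type} [Fintype V] [DecidableEq V] [Fintype E] [DecidableEq E]

/-- The greedy smallest-last ordering is a `4·H_n`-approximation for minimizing
the square-sum of left-degrees. -/
theorem greedy_harmonic_approx (G : Multigraph V E)
    (σ : V ≃ Fin (Fintype.card V))
    (hgreedy : ∀ v u : V, σ u ≤ σ v →
      G.degIn (Multigraph.prefixSet σ v) v ≤ G.degIn (Multigraph.prefixSet σ v) u) :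
    ∀ σ' : V ≃ Fin (Fintype.card V),
      (∑ v : V, ((G.leftDeg σ v : ℝ)) ^ 2) ≤
        4 * (∑ i ∈ Finset.range (Fintype.card V), (1 : ℝ) / (i + 1)) *
          ∑ v : V, ((G.leftDeg σ' v : ℝ)) ^ 2 := by
  intro σ'
  have hH : ∑ v, (1 : ℝ) / ((σ v : ℕ) + 1) = ∑ i ∈ range (Fintype.card V), (1 : ℝ) / (i + 1) := by
    rw [← Fin.sum_univ_eq_sum_range, σ.sum_comp (fun i => (1 : ℝ) / ((i : ℕ) + 1))]
  calc ∑ v, (G.leftDeg σ v : ℝ) ^ 2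
      ≤ ∑ v, 4 / ((σ v : ℕ) + 1) * ∑ u, (G.leftDeg σ' u : ℝ) ^ 2 :=
        sum_le_sum fun v _ => IsSmallestLast.leftDeg_sq_le hgreedy σ' v
    _ = 4 * (∑ i ∈ range (Fintype.card V), (1 : ℝ) / (i + 1)) * ∑ u, (G.leftDeg σ' u : ℝ) ^ 2 := by
        rw [← hH, ← sum_mul, mul_sum univ (fun v => (1 : ℝ) / ((σ v : ℕ) + 1)) 4]
        simp only [mul_one_div]
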